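/- arXiv:2211.14910 — 4 statements merged into one kernel-verified Lean document; each statement's English description precedes it below -/
import Mathlib

section
/- Let G be a finite group and define the Chermak–Delgado measure m_G(H) = |H| · |C_G(H)| for subgroups H ≤ G. If H attains the maximum value of m_G over all subgroups of G, then Z(G) ≤ H. -/
/-- The Chermak–Delgado measure of a subgroup. -/
noncomputable def cdMeasure {G : Type*} [Group G] (H : Subgroup G) : ℕ :=
  Nat.card H * Nat.card (Subgroup.centralizer (H : Set G))

/-! Adjoining the center to `H` does not change its centralizer, so by maximality of `m_G(H)`
the subgroup `H ⊔ Z(G)` can be no larger than `H`; hence it equals `H`. -/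

theorem Subgroup.centralizer_sup_center {G : Type*} [Group G] (H : Subgroup G) :
    centralizer ((H ⊔ center G : Subgroup G) : Set G) = centralizer (H : Set G) := by
  refine le_antisymm (centralizer_le (SetLike.coe_subset_coe.mpr le_sup_left)) ?_
  rw [← le_centralizer_iff]
  exact sup_le (le_centralizer_iff.mpr le_rfl) (center_le_centralizer _)

theorem center_le_of_cd_max
    (G : Type*) [Group G] [Finite G] (H : Subgroup G)
    (hmax : ∀ K : Subgroup G, cdMeasure K ≤ cdMeasure H) :
    Subgroup.center G ≤ H := by
  have hle := hmax (H ⊔ Subgroup.center G)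
  rw [cdMeasure, cdMeasure, Subgroup.centralizer_sup_center] at hle
  have hcard := Nat.le_of_mul_le_mul_right hle Nat.card_pos
  exact le_sup_right.trans (Subgroup.eq_of_le_of_card_ge le_sup_left hcard).ge
end

section
/- Let G be a finite group in which the trivial subgroup attains the maximal Chermak–Delgado measure (equivalently, m_G(H) ≤ |G| for all H ≤ G). Then no nontrivial subgroup of prime-power order attains the maximal Chermak–Delgado measure. -/
open Pointwise

namespace Subgroup

variable {G : Type*} [Group G]

theorem centralizer_sup (X Y : Subgroup G) :
    centralizer ((X ⊔ Y : Subgroup G) : Set G) = centralizer X ⊓ centralizer Y :=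
  le_antisymm
    (le_inf (centralizer_le (SetLike.coe_mono le_sup_left))
      (centralizer_le (SetLike.coe_mono le_sup_right)))
    (le_centralizer_iff.mp
      (sup_le (le_centralizer_iff.mp inf_le_left) (le_centralizer_iff.mp inf_le_right)))

theorem centralizer_smul {α : Type*} [Group α] [MulDistribMulAction α G] (a : α) (s : Set G) :
    centralizer (a • s) = a • centralizer s := by
  ext x
  rw [mem_pointwise_smul_iff_inv_smul_mem, mem_centralizer_iff, mem_centralizer_iff,
    ← Set.image_smul, Set.forall_mem_image]
  refine forall₂_congr fun h _ => ?_
  rw [← (MulAction.injective a⁻¹).eq_iff, smul_mul', smul_mul', inv_smul_smul]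

theorem card_pointwise_smul {α : Type*} [Group α] [MulDistribMulAction α G] (a : α)
    (H : Subgroup G) : Nat.card (a • H : Subgroup G) = Nat.card H :=
  Nat.card_congr (equivSMul a H).toEquiv.symm

theorem card_eq_relIndex_mul_card {H K : Subgroup G} (h : H ≤ K) :
    Nat.card K = H.relIndex K * Nat.card H := by
  rw [relIndex, ← card_mul_index (H.subgroupOf K), mul_comm,
    Nat.card_congr (subgroupOfEquivOfLe h).toEquiv]

variable [Finite G]

theorem card_mul_card_le_card_sup_mul_card_inf (X Y : Subgroup G) :
    Nat.card X * Nat.card Y ≤ Nat.card (X ⊔ Y : Subgroup G) * Nat.card (X ⊓ Y : Subgroup G) := by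
  have hrel : X.relIndex Y ≤ X.relIndex (X ⊔ Y) :=
    relIndex_le_of_le_right le_sup_right FiniteIndex.index_ne_zero
  calc Nat.card X * Nat.card Y
      = Nat.card X * (X.relIndex Y * Nat.card (X ⊓ Y : Subgroup G)) := by
        rw [← inf_relIndex_right, ← card_eq_relIndex_mul_card inf_le_right]
    _ ≤ Nat.card X * (X.relIndex (X ⊔ Y) * Nat.card (X ⊓ Y : Subgroup G)) := by gcongr
    _ = Nat.card (X ⊔ Y : Subgroup G) * Nat.card (X ⊓ Y : Subgroup G) := by
        rw [card_eq_relIndex_mul_card le_sup_left]; ring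

theorem card_centralizer_mul_card_centralizer_le (X Y : Subgroup G) :
    Nat.card (centralizer (X : Set G)) * Nat.card (centralizer (Y : Set G))
      ≤ Nat.card (centralizer ((X ⊔ Y : Subgroup G) : Set G))
        * Nat.card (centralizer ((X ⊓ Y : Subgroup G) : Set G)) := by
  have hsup : centralizer (X : Set G) ⊔ centralizer Y
      ≤ centralizer ((X ⊓ Y : Subgroup G) : Set G) :=
    sup_le (centralizer_le (SetLike.coe_mono inf_le_left))
      (centralizer_le (SetLike.coe_mono inf_le_right))
  calc _ ≤ Nat.card (centralizer (X : Set G) ⊔ centralizer Y : Subgroup G)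
        * Nat.card (centralizer (X : Set G) ⊓ centralizer Y : Subgroup G) :=
        card_mul_card_le_card_sup_mul_card_inf _ _
    _ ≤ _ := by
        rw [centralizer_sup, mul_comm]
        exact Nat.mul_le_mul_left _ (card_le_of_le hsup)

theorem isPGroup_sup_of_card_sup_mul_card_inf_eq {p : ℕ} {X Y : Subgroup G}
    (hX : IsPGroup p X) (hY : IsPGroup p Y)
    (h : Nat.card (X ⊔ Y : Subgroup G) * Nat.card (X ⊓ Y : Subgroup G) = Nat.card X * Nat.card Y) :
    IsPGroup p (X ⊔ Y : Subgroup G) := by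
  obtain ⟨a, ha⟩ := isPGroup_iff_card_dvd_pow.mp hX
  obtain ⟨b, hb⟩ := isPGroup_iff_card_dvd_pow.mp hY
  refine IsPGroup.of_card_dvd_pow (n := a + b) ?_
  rw [pow_add]
  exact (Dvd.intro _ h).trans (mul_dvd_mul ha hb)

theorem inf_centralizer_ne_bot_of_isPGroup {p : ℕ} [Fact p.Prime] {S : Subgroup G}
    (hS : IsPGroup p S) (N : Subgroup G) [N.Normal] (hN : p ∣ Nat.card N) :
    N ⊓ centralizer S ≠ ⊥ := by
  let _ : MulAction S N := MulAction.compHom N ((MulAut.conjNormal (H := N)).comp S.subtype)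
  obtain ⟨b, hb, hb1⟩ := hS.exists_fixed_point_of_prime_dvd_card_of_fixed_point N hN
    (a := 1) fun s => map_one (MulAut.conjNormal (s : G))
  have hbS : (b : G) ∈ centralizer S := fun s hs => by
    rw [← mul_inv_eq_iff_eq_mul]
    exact congrArg Subtype.val (hb ⟨s, hs⟩)
  intro h
  exact hb1 (Subtype.ext ((mem_bot.mp (h ▸ mem_inf.mpr ⟨b.2, hbS⟩)).symm))

theorem inf_center_ne_bot_of_index_centralizer_eq_pow {p : ℕ} [Fact p.Prime]
    {N : Subgroup G} [N.Normal] (hN : IsPGroup p N) (hN1 : N ≠ ⊥) {k : ℕ}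
    (hidx : (centralizer (N : Set G)).index = p ^ k) :
    N ⊓ center G ≠ ⊥ := by
  obtain ⟨S⟩ : Nonempty (Sylow p G) := inferInstance
  have hpN : p ∣ Nat.card N := hN.card_eq_or_dvd.resolve_left (mt card_eq_one.mp hN1)
  refine ne_bot_of_le_ne_bot (inf_centralizer_ne_bot_of_isPGroup S.isPGroup' N hpN)
    (le_inf inf_le_left fun b ⟨hbN, hbS⟩ => ?_)
  have hcop : (p ^ k).Coprime (S : Subgroup G).index :=
    Nat.Coprime.pow_left k ((Fact.out : p.Prime).coprime_iff_not_dvd.mpr S.not_dvd_index)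
  -- `centralizer {b}` contains `centralizer N` and `S`, so its index divides `p ^ k` and `[G : S]`
  have hb : centralizer {b} = ⊤ := index_eq_one.mp <| Nat.eq_one_of_dvd_coprimes hcop
    (hidx ▸ index_dvd_of_le (centralizer_le (Set.singleton_subset_iff.mpr hbN)))
    (index_dvd_of_le fun s hs => mem_centralizer_singleton_iff.mpr (hbS s hs))
  exact centralizer_eq_top_iff_subset.mp hb rfl

end Subgroup

open Subgroup

section

variable {G : Type*} [Group G]

theorem cdMeasure_bot : cdMeasure (⊥ : Subgroup G) = Nat.card G := by
  rw [cdMeasure, card_bot, one_mul, coe_bot, centralizer_eq_top_iff_subset.mpr, card_top]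
  exact Set.singleton_subset_iff.mpr (one_mem _)

theorem cdMeasure_top : cdMeasure (⊤ : Subgroup G) = Nat.card G * Nat.card (center G) := by
  rw [cdMeasure, card_top, coe_top, centralizer_univ]

theorem cdMeasure_smul {α : Type*} [Group α] [MulDistribMulAction α G] (a : α) (H : Subgroup G) :
    cdMeasure (a • H) = cdMeasure H := by
  rw [cdMeasure, cdMeasure, coe_pointwise_smul, centralizer_smul, card_pointwise_smul,
    card_pointwise_smul]

theorem cdMeasure_mul_cdMeasure (X Y : Subgroup G) :
    cdMeasure X * cdMeasure Y = Nat.card X * Nat.card Y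
      * (Nat.card (centralizer (X : Set G)) * Nat.card (centralizer (Y : Set G))) :=
  mul_mul_mul_comm _ _ _ _

variable [Finite G]

theorem cdMeasure_pos (H : Subgroup G) : 0 < cdMeasure H :=
  Nat.mul_pos Nat.card_pos Nat.card_pos

theorem center_eq_bot_of_cdMeasure_top_le (h : cdMeasure (⊤ : Subgroup G) ≤ Nat.card G) :
    center G = ⊥ := by
  rw [cdMeasure_top] at h
  exact card_eq_one.mp <| le_antisymm
    (Nat.le_of_mul_le_mul_left (by rwa [mul_one]) Nat.card_pos) Nat.card_pos

theorem cdMeasure_sup_eq_and_card_sup_mul_card_inf_eq {n : ℕ}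
    (hmax : ∀ K : Subgroup G, cdMeasure K ≤ n) {X Y : Subgroup G}
    (hX : cdMeasure X = n) (hY : cdMeasure Y = n) :
    cdMeasure (X ⊔ Y) = n ∧
      Nat.card (X ⊔ Y : Subgroup G) * Nat.card (X ⊓ Y : Subgroup G) = Nat.card X * Nat.card Y := by
  have hcard := card_mul_card_le_card_sup_mul_card_inf X Y
  have hcent := card_centralizer_mul_card_centralizer_le X Y
  -- `m X * m Y ≤ m (X ⊔ Y) * m (X ⊓ Y) ≤ n * n = m X * m Y`, so equality holds factorwise
  have heq : cdMeasure (X ⊔ Y) * cdMeasure (X ⊓ Y) = cdMeasure X * cdMeasure Y := by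
    refine le_antisymm ((Nat.mul_le_mul (hmax _) (hmax _)).trans (by rw [hX, hY])) ?_
    rw [cdMeasure_mul_cdMeasure, cdMeasure_mul_cdMeasure]
    exact Nat.mul_le_mul hcard hcent
  constructor
  · rw [hX, hY] at heq
    exact ((mul_eq_mul_iff_eq_and_eq_of_pos' (hmax _) (hmax _) (hX ▸ cdMeasure_pos X)
      (cdMeasure_pos _)).mp heq).1
  · rw [cdMeasure_mul_cdMeasure, cdMeasure_mul_cdMeasure] at heq
    exact ((mul_eq_mul_iff_eq_and_eq_of_pos hcard hcent (Nat.mul_pos Nat.card_pos Nat.card_pos)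
      (Nat.mul_pos Nat.card_pos Nat.card_pos)).mp heq.symm).1.symm

theorem index_centralizer_eq_card_of_cdMeasure_eq {N : Subgroup G}
    (h : cdMeasure N = Nat.card G) : (centralizer (N : Set G)).index = Nat.card N :=
  Nat.eq_of_mul_eq_mul_left Nat.card_pos <| by rw [card_mul_index, ← h, cdMeasure, mul_comm]

theorem normal_of_maximal_isPGroup_cdMeasure_eq {p n : ℕ}
    (hmax : ∀ K : Subgroup G, cdMeasure K ≤ n) {N : Subgroup G}
    (hN : Maximal (fun K : Subgroup G => IsPGroup p K ∧ cdMeasure K = n) N) : N.Normal := by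
  refine Normal.of_conjugate_fixed fun g => ?_
  have hconj : IsPGroup p (MulAut.conj g • N : Subgroup G) ∧ cdMeasure (MulAut.conj g • N) = n :=
    ⟨hN.1.1.of_equiv (equivSMul _ N), (cdMeasure_smul _ N).trans hN.1.2⟩
  obtain ⟨hsup, hcard⟩ := cdMeasure_sup_eq_and_card_sup_mul_card_inf_eq hmax hN.1.2 hconj.2
  have hle : MulAut.conj g • N ≤ N := le_sup_right.trans <|
    hN.2 ⟨isPGroup_sup_of_card_sup_mul_card_inf_eq hN.1.1 hconj.1 hcard, hsup⟩ le_sup_left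
  exact eq_of_le_of_card_ge hle (card_pointwise_smul _ N).ge

end

theorem no_pGroup_cd_max_of_bot_cd_max
    (G : Type*) [Group G] [Finite G]
    (hbot : ∀ K : Subgroup G, cdMeasure K ≤ cdMeasure (⊥ : Subgroup G)) :
    ∀ (p : ℕ), p.Prime → ∀ H : Subgroup G, IsPGroup p H → H ≠ ⊥ →
      ¬ (∀ K : Subgroup G, cdMeasure K ≤ cdMeasure H) := by
  intro p hp H hH hH1 hHmax
  have : Fact p.Prime := ⟨hp⟩
  rw [cdMeasure_bot] at hbot
  obtain ⟨N, hHN, hN⟩ := Finite.exists_le_maximal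
    (p := fun K : Subgroup G => IsPGroup p K ∧ cdMeasure K = Nat.card G)
    ⟨hH, le_antisymm (hbot H) (cdMeasure_bot (G := G) ▸ hHmax ⊥)⟩
  have hNnormal : N.Normal := normal_of_maximal_isPGroup_cdMeasure_eq hbot hN
  obtain ⟨k, hk⟩ := IsPGroup.iff_card.mp hN.1.1
  apply inf_center_ne_bot_of_index_centralizer_eq_pow hN.1.1 (ne_bot_of_le_ne_bot hH1 hHN)
    ((index_centralizer_eq_card_of_cdMeasure_eq hN.1.2).trans hk)
  rw [center_eq_bot_of_cdMeasure_top_le (hbot ⊤), inf_bot_eq]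
end

section
/- Let G be a finite nilpotent group and p a prime dividing |G|. Then p divides the order of every subgroup attaining the maximum Chermak–Delgado measure of G. -/
namespace Subgroup

variable {G : Type*} [Group G]

lemma inf_upperCentralSeries_eq_bot {N : Subgroup G} [N.Normal] (hN : N ⊓ center G = ⊥) :
    ∀ n, N ⊓ upperCentralSeries G n = ⊥
  | 0 => by rw [upperCentralSeries_zero, inf_bot_eq]
  | n + 1 => by
    -- `⁅N ⊓ Z_{n+1}, G⁆ ≤ N ⊓ Z_n = ⊥`, so `N ⊓ Z_{n+1}` is central
    refine eq_bot_iff.mpr (le_trans (le_inf inf_le_left ?_) hN.le)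
    rw [← centralizer_univ, ← coe_top, ← commutator_eq_bot_iff_le_centralizer, eq_bot_iff,
      ← inf_upperCentralSeries_eq_bot hN n]
    exact le_inf ((commutator_mono inf_le_left le_rfl).trans (commutator_le_left N ⊤))
      ((commutator_mono inf_le_right le_rfl).trans (commutator_upperCentralSeries_top_le G n))

lemma Normal.inf_center_ne_bot [Group.IsNilpotent G] {N : Subgroup G} [N.Normal]
    (hN : N ≠ ⊥) : N ⊓ center G ≠ ⊥ := by
  obtain ⟨n, hn⟩ := Group.IsNilpotent.nilpotent G
  exact fun h ↦ hN (by simpa [hn] using inf_upperCentralSeries_eq_bot h n)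

lemma prime_dvd_card_center_of_isNilpotent [Finite G] [Group.IsNilpotent G] {p : ℕ}
    [Fact p.Prime] (hpG : p ∣ Nat.card G) : p ∣ Nat.card (center G) := by
  obtain ⟨P⟩ : Nonempty (Sylow p G) := inferInstance
  have hS : IsPGroup p ↥((P : Subgroup G) ⊓ center G) := P.isPGroup'.to_inf_left
  have : Nontrivial ↥((P : Subgroup G) ⊓ center G) :=
    (nontrivial_iff_ne_bot _).mpr (Normal.inf_center_ne_bot (P.ne_bot_of_dvd_card hpG))
  obtain ⟨k, hk, hcard⟩ := hS.nontrivial_iff_card.mp this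
  exact (dvd_pow_self p hk.ne').trans (hcard ▸ card_dvd_of_le inf_le_right)

lemma centralizer_centralizer_eq_of_forall_cdMeasure_le [Finite G] {H : Subgroup G}
    (hmax : ∀ K : Subgroup G, cdMeasure K ≤ cdMeasure H) :
    centralizer (centralizer (H : Set G) : Set G) = H := by
  have hle : Nat.card (centralizer (centralizer (H : Set G) : Set G)) ≤ Nat.card H := by
    have := hmax (centralizer H)
    rw [cdMeasure, cdMeasure, mul_comm (Nat.card H)] at this
    exact Nat.le_of_mul_le_mul_left this Nat.card_pos
  exact (eq_of_le_of_card_ge (le_centralizer_iff.mp le_rfl) hle).symm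

lemma center_le_of_forall_cdMeasure_le [Finite G] {H : Subgroup G}
    (hmax : ∀ K : Subgroup G, cdMeasure K ≤ cdMeasure H) : center G ≤ H :=
  centralizer_centralizer_eq_of_forall_cdMeasure_le hmax ▸ center_le_centralizer _

end Subgroup

theorem prime_dvd_card_of_cd_max_of_nilpotent
    (G : Type*) [Group G] [Finite G] [Group.IsNilpotent G]
    (p : ℕ) (hp : p.Prime) (hpG : p ∣ Nat.card G)
    (H : Subgroup G) (hmax : ∀ K : Subgroup G, cdMeasure K ≤ cdMeasure H) :
    p ∣ Nat.card H :=
  have : Fact p.Prime := ⟨hp⟩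
  (Subgroup.prime_dvd_card_center_of_isNilpotent hpG).trans
    (Subgroup.card_dvd_of_le (Subgroup.center_le_of_forall_cdMeasure_le hmax))
end

section
/- For the generalized quaternion group Q_{2^k} with k > 3, exactly one subgroup (the cyclic subgroup of index 2) attains the maximum Chermak–Delgado measure; in particular m*(Q_{2^k}) = (2^{k-1})². -/
theorem forall_le_iff_eq_of_forall_ne_lt {α β : Type*} [LinearOrder β] {f : α → β} {x : α}
    (h : ∀ y ≠ x, f y < f x) (z : α) : (∀ y, f y ≤ f z) ↔ z = x := by
  refine ⟨fun hz ↦ by_contra fun hzx ↦ (h z hzx).not_ge (hz x), ?_⟩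
  rintro rfl y
  rcases eq_or_ne y z with rfl | hy
  exacts [le_rfl, (h y hy).le]

theorem Subgroup.card_le_card_finset {G : Type*} [Group G] {H : Subgroup G} {s : Finset G}
    (h : (H : Set G) ⊆ s) : Nat.card H ≤ s.card := by
  simpa using Nat.card_mono s.finite_toSet h

namespace ZMod

theorem two_ne_zero_of_three_le {m : ℕ} (hm : 3 ≤ m) : (2 : ZMod m) ≠ 0 := by
  intro h
  have := Nat.le_of_dvd two_pos ((natCast_eq_zero_iff 2 m).1 (by exact_mod_cast h))
  omega

theorem two_mul_eq_zero_iff {n : ℕ} [NeZero n] {i : ZMod (2 * n)} :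
    2 * i = 0 ↔ i = 0 ∨ i = n := by
  constructor
  · intro h
    have hdvd : 2 * n ∣ 2 * i.val := by
      rw [← natCast_eq_zero_iff]
      push_cast
      rwa [natCast_zmod_val]
    have hlt := i.val_lt
    obtain ⟨c, hc⟩ := hdvd
    have hc2 : c < 2 := by nlinarith
    rw [← natCast_zmod_val i]
    interval_cases c
    · left; simp [show i.val = 0 by omega]
    · right; rw [show i.val = n by omega]
  · rintro (rfl | rfl)
    · simp
    · exact_mod_cast natCast_self (2 * n)

end ZMod

namespace QuaternionGroup

open Subgroup

variable {n : ℕ}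

theorem a_one_zpow (k : ℤ) : (a 1 : QuaternionGroup n) ^ k = a k := by
  cases k with
  | ofNat k => simp [a_one_pow]
  | negSucc k => rw [zpow_negSucc, a_one_pow]; push_cast; rfl

theorem mem_zpowers_a_one {g : QuaternionGroup n} : g ∈ zpowers (a 1) ↔ ∃ i, a i = g := by
  refine ⟨fun ⟨k, hk⟩ ↦ ⟨k, by rw [← hk, ← a_one_zpow]⟩, ?_⟩
  rintro ⟨i, rfl⟩
  exact ⟨(i.cast : ℤ), by simp only [a_one_zpow, ZMod.intCast_zmod_cast]⟩

theorem a_mem_zpowers_a_one (i : ZMod (2 * n)) : a i ∈ zpowers (a 1) :=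
  mem_zpowers_a_one.2 ⟨i, rfl⟩

theorem nat_card [NeZero n] : Nat.card (QuaternionGroup n) = 4 * n := by
  rw [Nat.card_eq_fintype_card, card]

theorem card_zpowers_a_one : Nat.card (zpowers (a 1 : QuaternionGroup n)) = 2 * n := by
  rw [Nat.card_zpowers, orderOf_a_one]

theorem index_zpowers_a_one [NeZero n] : (zpowers (a 1 : QuaternionGroup n)).index = 2 := by
  have h := (zpowers (a 1 : QuaternionGroup n)).card_mul_index
  rw [card_zpowers_a_one, nat_card] at h
  have := NeZero.pos n
  nlinarith

theorem mem_zpowers_a_one_of_commute {i : ZMod (2 * n)} (hi : 2 * i ≠ 0) {g : QuaternionGroup n}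
    (h : Commute (a i) g) : g ∈ zpowers (a 1) := by
  cases g with
  | a j => exact a_mem_zpowers_a_one j
  | xa j =>
    have h' : xa (j - i) = xa (j + i) := by rw [← a_mul_xa, ← xa_mul_a]; exact h
    injection h' with h'
    exact absurd (by linear_combination -h') hi

theorem mem_of_commute_xa [NeZero n] {j : ZMod (2 * n)} {g : QuaternionGroup n}
    (h : Commute (xa j) g) :
    g ∈ ({a 0, a n, xa j, xa (j + (n : ZMod (2 * n)))} : Finset (QuaternionGroup n)) := by
  cases g with
  | a i =>
    have h' : xa (j + i) = xa (j - i) := by rw [← a_mul_xa, ← xa_mul_a]; exact h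
    injection h' with h'
    rcases ZMod.two_mul_eq_zero_iff.1 (by linear_combination h' : 2 * i = 0) with rfl | rfl <;> simp
  | xa i =>
    have h' : a ((n : ZMod (2 * n)) + i - j) = a ((n : ZMod (2 * n)) + j - i) := by
      rw [← xa_mul_xa, ← xa_mul_xa]; exact h
    injection h' with h'
    rcases ZMod.two_mul_eq_zero_iff.1 (by linear_combination h' : 2 * (i - j) = 0) with h'' | h''
    · obtain rfl : i = j := by linear_combination h''
      simp
    · obtain rfl : i = j + n := by linear_combination h''
      simp

theorem centralizer_zpowers_a_one (hn : 2 ≤ n) :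
    centralizer (zpowers (a 1 : QuaternionGroup n) : Set (QuaternionGroup n)) = zpowers (a 1) := by
  refine le_antisymm (fun g hg ↦ mem_zpowers_a_one_of_commute ?_
    (mem_centralizer_iff.1 hg _ (mem_zpowers _))) (le_centralizer _)
  simpa using ZMod.two_ne_zero_of_three_le (m := 2 * n) (by omega)

theorem cdMeasure_zpowers_a_one (hn : 2 ≤ n) :
    cdMeasure (zpowers (a 1 : QuaternionGroup n)) = (2 * n) ^ 2 := by
  rw [cdMeasure, centralizer_zpowers_a_one hn, card_zpowers_a_one, sq]

theorem cdMeasure_lt_of_lt_zpowers_a_one (hn : 3 ≤ n) {K : Subgroup (QuaternionGroup n)}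
    (hK : K < zpowers (a 1)) : cdMeasure K < (2 * n) ^ 2 := by
  have : NeZero n := ⟨by omega⟩
  by_cases hcyc : ∃ i, a i ∈ K ∧ 2 * i ≠ 0
  · obtain ⟨i, hi, hi2⟩ := hcyc
    have hC : centralizer (K : Set _) ≤ zpowers (a 1) := fun g hg ↦
      mem_zpowers_a_one_of_commute hi2 (mem_centralizer_iff.1 hg _ hi)
    have hKlt : Nat.card K < 2 * n :=
      card_zpowers_a_one (n := n) ▸ Set.ncard_lt_ncard (SetLike.coe_ssubset_coe.2 hK)
    calc cdMeasure K ≤ Nat.card K * (2 * n) :=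
          Nat.mul_le_mul_left _ (card_zpowers_a_one (n := n) ▸ card_le_of_le hC)
      _ < (2 * n) * (2 * n) := Nat.mul_lt_mul_of_pos_right hKlt (by omega)
      _ = (2 * n) ^ 2 := (sq _).symm
  · push Not at hcyc
    have hK2 : Nat.card K ≤ 2 := by
      refine (card_le_card_finset (s := {a 0, a n}) fun g hg ↦ ?_).trans Finset.card_le_two
      obtain ⟨i, rfl⟩ := mem_zpowers_a_one.1 (hK.le hg)
      rcases ZMod.two_mul_eq_zero_iff.1 (hcyc i hg) with rfl | rfl <;> simp
    calc cdMeasure K ≤ 2 * (4 * n) :=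
          Nat.mul_le_mul hK2 (nat_card (n := n) ▸ card_le_card_group _)
      _ < (2 * n) ^ 2 := by nlinarith

theorem cdMeasure_lt_of_xa_mem (hn : 3 ≤ n) {K : Subgroup (QuaternionGroup n)} {j : ZMod (2 * n)}
    (hj : xa j ∈ K) : cdMeasure K < (2 * n) ^ 2 := by
  have : NeZero n := ⟨by omega⟩
  by_cases hx : ∃ j', xa j' ∈ centralizer (K : Set (QuaternionGroup n))
  · obtain ⟨j', hj'⟩ := hx
    -- `K` centralizes `xa j'`, so `K` and its centralizer both lie in the four-element `C(xa j')`.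
    have hK4 : Nat.card K ≤ 4 := (card_le_card_finset fun g hg ↦
      mem_of_commute_xa (mem_centralizer_iff.1 hj' g hg).symm).trans Finset.card_le_four
    have hC4 : Nat.card (centralizer (K : Set (QuaternionGroup n))) ≤ 4 := (card_le_card_finset
      fun g hg ↦ mem_of_commute_xa (mem_centralizer_iff.1 hg _ hj)).trans Finset.card_le_four
    calc cdMeasure K ≤ 4 * 4 := Nat.mul_le_mul hK4 hC4
      _ < (2 * n) ^ 2 := by nlinarith
  · push Not at hx
    have hC2 : Nat.card (centralizer (K : Set (QuaternionGroup n))) ≤ 2 := by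
      refine (card_le_card_finset (s := {a 0, a n}) fun g hg ↦ ?_).trans Finset.card_le_two
      have hg4 := mem_of_commute_xa (mem_centralizer_iff.1 hg _ hj)
      simp only [Finset.mem_insert, Finset.mem_singleton] at hg4
      rcases hg4 with rfl | rfl | rfl | rfl
      · simp
      · simp
      · exact absurd hg (hx j)
      · exact absurd hg (hx _)
    calc cdMeasure K ≤ 4 * n * 2 :=
          Nat.mul_le_mul (nat_card (n := n) ▸ card_le_card_group _) hC2
      _ < (2 * n) ^ 2 := by nlinarith

theorem cdMeasure_lt_of_ne_zpowers_a_one (hn : 3 ≤ n) {K : Subgroup (QuaternionGroup n)}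
    (hK : K ≠ zpowers (a 1)) : cdMeasure K < cdMeasure (zpowers (a 1 : QuaternionGroup n)) := by
  rw [cdMeasure_zpowers_a_one (by omega)]
  by_cases hKA : K ≤ zpowers (a 1)
  · exact cdMeasure_lt_of_lt_zpowers_a_one hn (lt_of_le_of_ne hKA hK)
  · obtain ⟨g, hgK, hgA⟩ := SetLike.not_le_iff_exists.1 hKA
    cases g with
    | a i => exact absurd (a_mem_zpowers_a_one i) hgA
    | xa j => exact cdMeasure_lt_of_xa_mem hn hgK

end QuaternionGroup

/-- For the generalized quaternion group `Q_{2^k}` (`k > 3`), realized as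
`QuaternionGroup (2^(k-2))` (of order `4 * 2^(k-2) = 2^k`), exactly one subgroup
attains the maximum Chermak–Delgado measure, namely the cyclic subgroup of index 2,
and the maximum measure is `(2^(k-1))^2`. -/
theorem cd_of_generalized_quaternion (k : ℕ) (hk : 3 < k) :
    (∃! H : Subgroup (QuaternionGroup (2 ^ (k - 2))),
        ∀ K : Subgroup (QuaternionGroup (2 ^ (k - 2))), cdMeasure K ≤ cdMeasure H) ∧
    ∀ H : Subgroup (QuaternionGroup (2 ^ (k - 2))),
      (∀ K : Subgroup (QuaternionGroup (2 ^ (k - 2))), cdMeasure K ≤ cdMeasure H) →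
        H.index = 2 ∧ IsCyclic H ∧ cdMeasure H = (2 ^ (k - 1)) ^ 2 := by
  have hn : 3 ≤ 2 ^ (k - 2) := calc
    3 ≤ 2 ^ 2 := by norm_num
    _ ≤ 2 ^ (k - 2) := Nat.pow_le_pow_right two_pos (by omega)
  have : NeZero (2 ^ (k - 2)) := ⟨by positivity⟩
  have hmax := forall_le_iff_eq_of_forall_ne_lt fun _ ↦
    QuaternionGroup.cdMeasure_lt_of_ne_zpowers_a_one hn
  refine ⟨⟨Subgroup.zpowers (QuaternionGroup.a 1), (hmax _).2 rfl, fun H hH ↦ (hmax H).1 hH⟩,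
    fun H hH ↦ ?_⟩
  obtain rfl := (hmax H).1 hH
  refine ⟨QuaternionGroup.index_zpowers_a_one, inferInstance, ?_⟩
  rw [QuaternionGroup.cdMeasure_zpowers_a_one (by omega), ← pow_succ',
    show k - 2 + 1 = k - 1 by omega]
end
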